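/- If u ≤ u_C := 1/(ρ_B·B''(ρ_B)) and y(u) = ρ_B, then ρ(u) = ρ_B·exp(−u·B'(ρ_B)), and the mean of the offspring law μ^u equals u·ρ_B·B''(ρ_B) = u/u_C ≤ 1. In particular, the mean is strictly less than 1 if and only if u < u_C. -/

import Mathlib

theorem stmt6_general
    (Bp Bpp : ℝ → ℝ) (ρB : ℝ) (hρB : 0 < ρB) (hBppρB : 0 < Bpp ρB)
    (uC : ℝ) (huC : uC = 1 / (ρB * Bpp ρB))
    (u : ℝ) (hule : u ≤ uC)
    (ρ y : ℝ → ℝ)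
    (hρy : ρ u = y u * Real.exp (-(u * Bp (y u))))
    (hyρB : y u = ρB)
    (mean : ℝ) (hmean : mean = u * y u * Bpp (y u)) :
    ρ u = ρB * Real.exp (-(u * Bp ρB)) ∧
      mean = u * ρB * Bpp ρB ∧ mean = u / uC ∧ mean ≤ 1 ∧
      (mean < 1 ↔ u < uC) := by
  have huC_pos : 0 < uC := huC ▸ one_div_pos.mpr (mul_pos hρB hBppρB)
  have hmean_at_ρB : mean = u * ρB * Bpp ρB := by rw [hmean, hyρB]
  have hmean_div : mean = u / uC := by
    rw [hmean_at_ρB, huC, div_div_eq_mul_div, div_one, mul_assoc]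
  refine ⟨by rw [hρy, hyρB], hmean_at_ρB, hmean_div, ?_, ?_⟩
  · rw [hmean_div]
    exact (div_le_one huC_pos).mpr hule
  · rw [hmean_div, div_lt_one huC_pos]

/-- If `u ≤ u_C := 1/(ρB·B''(ρB))` and `y(u) = ρB`, then
`ρ(u) = ρB·exp(−u·B'(ρB))` and the mean of the offspring law `μ^u`, which
equals `u·y(u)·B''(y(u))`, equals `u·ρB·B''(ρB) = u/u_C ≤ 1`.  In particular
the mean is strictly less than `1` iff `u < u_C`. -/
theorem stmt6
    (Bp Bpp : ℝ → ℝ) (ρB : ℝ) (hρB : 0 < ρB) (hBppρB : 0 < Bpp ρB)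
    (uC : ℝ) (huC : uC = 1 / (ρB * Bpp ρB))
    (u : ℝ) (hu : 0 < u) (hule : u ≤ uC)
    (ρ y : ℝ → ℝ)
    (hρy : ρ u = y u * Real.exp (-(u * Bp (y u))))
    (hyρB : y u = ρB)
    (mean : ℝ) (hmean : mean = u * y u * Bpp (y u)) :
    ρ u = ρB * Real.exp (-(u * Bp ρB)) ∧
      mean = u * ρB * Bpp ρB ∧ mean = u / uC ∧ mean ≤ 1 ∧
      (mean < 1 ↔ u < uC) :=
  stmt6_general Bp Bpp ρB hρB hBppρB uC huC u hule ρ y hρy hyρB mean hmean
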